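/- arXiv:2202.02765 — 11 statements merged into one kernel-verified Lean document; each statement's English description precedes it below -/
import Mathlib

section
/- For all x ∈ (0,∞), ĥ̲(x) ≤ h(x), and equality holds at x = y. -/
/-!
With `t = x / y`, the inequality `ĥ ≤ h` reads `log t ≤ (t - 1) - (β/2)(t - 1)²`. The difference
of the two sides vanishes at `t = 1` and has derivative `(t - 1)(1 - βt)/t`, which has the sign
of `t - 1` as long as `βt ≤ 1`; so it is nonnegative on `(0, 1/β]`, i.e. `ĥ ≤ h` on `(0, y/β]`.
Beyond `y/β` the slope `-β/y` of the extension is also `h'(y/β)`, so the extension lies below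
the tangent line of the convex function `h` at `y/β`.
-/

open Set Real

theorem le_of_hasDerivAt_of_sub_mul_deriv_nonneg {f f' : ℝ → ℝ} {a x : ℝ}
    (hf : ∀ s ∈ uIcc a x, HasDerivAt f (f' s) s) (hsign : ∀ s ∈ uIcc a x, 0 ≤ (s - a) * f' s) :
    f a ≤ f x := by
  have hcont : ContinuousOn f (uIcc a x) := fun s hs ↦ (hf s hs).continuousAt.continuousWithinAt
  have hderiv : ∀ s ∈ interior (uIcc a x), HasDerivWithinAt f (f' s) (interior (uIcc a x)) s :=
    fun s hs ↦ (hf s (interior_subset hs)).hasDerivWithinAt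
  rcases le_total a x with hax | hxa
  · rw [uIcc_of_le hax] at hcont hderiv hsign
    refine monotoneOn_of_hasDerivWithinAt_nonneg (convex_Icc a x) hcont hderiv (fun s hs ↦ ?_)
      (left_mem_Icc.2 hax) (right_mem_Icc.2 hax) hax
    rw [interior_Icc] at hs
    exact (mul_nonneg_iff_of_pos_left (sub_pos.2 hs.1)).1 (hsign s (Ioo_subset_Icc_self hs))
  · rw [uIcc_of_ge hxa] at hcont hderiv hsign
    refine antitoneOn_of_hasDerivWithinAt_nonpos (convex_Icc x a) hcont hderiv (fun s hs ↦ ?_)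
      (left_mem_Icc.2 hxa) (right_mem_Icc.2 hxa) hxa
    rw [interior_Icc] at hs
    exact nonpos_of_mul_nonneg_right (hsign s (Ioo_subset_Icc_self hs)) (sub_neg.2 hs.2)

theorem log_le_sub_one_sub_mul_sq {β t : ℝ} (hβ : β ≤ 1) (ht : 0 < t) (hβt : β * t ≤ 1) :
    log t ≤ t - 1 - β / 2 * (t - 1) ^ 2 := by
  have hpos : ∀ s ∈ uIcc 1 t, 0 < s := fun s hs ↦ lt_of_lt_of_le (lt_min one_pos ht) hs.1
  have hslope : ∀ s ∈ uIcc 1 t, 0 ≤ 1 - β * s := by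
    intro s hs
    rcases le_total 0 β with hβ0 | hβ0
    · have hle := mul_le_mul_of_nonneg_left hs.2 hβ0
      rw [mul_max_of_nonneg _ _ hβ0, mul_one] at hle
      linarith [max_le hβ hβt]
    · nlinarith [hpos s hs]
  have key := le_of_hasDerivAt_of_sub_mul_deriv_nonneg
    (f := fun s ↦ s - 1 - β / 2 * (s - 1) ^ 2 - log s) (f' := fun s ↦ 1 - β * (s - 1) - s⁻¹)
    (fun s hs ↦
      ((((hasDerivAt_id s).sub_const 1).sub
        ((((hasDerivAt_id s).sub_const 1).pow 2).const_mul (β / 2))).sub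
        (hasDerivAt_log (hpos s hs).ne')).congr_deriv (by simp; ring))
    (fun s hs ↦ by
      have hs0 := hpos s hs
      have hfactor : (s - 1) * (1 - β * (s - 1) - s⁻¹) = (s - 1) ^ 2 * (1 - β * s) / s := by
        field_simp; ring
      rw [hfactor]
      exact div_nonneg (mul_nonneg (sq_nonneg _) (hslope s hs)) hs0.le)
  simp only [sub_self, log_one] at key
  linarith

/-- Fix `y > 0` and `0 < β ≤ 1`. With `h x = -log x`, the quadratic surrogate
`ĥ x = -log y - (x-y)/y + (β/2)(x-y)²/y²` and the lower surrogate `ĥ̲` (equal to `ĥ` for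
`x ≤ y/β` and its linear extension with slope `-β/y` beyond `y/β`), we have
`ĥ̲ x ≤ h x` for all `x ∈ (0,∞)`, with equality at `x = y`. -/
theorem stmt0 (y β : ℝ) (hy : 0 < y) (hβ0 : 0 < β) (hβ1 : β ≤ 1)
    (h hhat hlow : ℝ → ℝ)
    (hdef : ∀ x, h x = -Real.log x)
    (hhatdef : ∀ x, hhat x = -Real.log y - (x - y) / y + (β / 2) * (x - y) ^ 2 / y ^ 2)
    (hlowdef : ∀ x, hlow x =
      if x ≤ y / β then hhat x else hhat (y / β) - (β / y) * (x - y / β)) :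
    (∀ x, 0 < x → hlow x ≤ h x) ∧ hlow y = h y := by
  have hc : 0 < y / β := div_pos hy hβ0
  have hhat_le : ∀ x, 0 < x → x ≤ y / β → hhat x ≤ h x := by
    intro x hx hxc
    have hquad := log_le_sub_one_sub_mul_sq hβ1 (div_pos hx hy)
      (by rwa [← mul_div_assoc, div_le_one hy, ← le_div_iff₀' hβ0])
    have hhat_eq : hhat x = -log y - (x / y - 1) + β / 2 * (x / y - 1) ^ 2 := by
      rw [hhatdef]; field_simp
    rw [log_div hx.ne' hy.ne'] at hquad
    rw [hhat_eq, hdef]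
    linarith
  refine ⟨fun x hx ↦ ?_, ?_⟩
  · rw [hlowdef]
    split_ifs with hxc
    · exact hhat_le x hx hxc
    · have htangent := log_le_sub_one_of_pos (div_pos hx hc)
      have hslope : x / (y / β) - 1 = β / y * (x - y / β) := by field_simp
      rw [log_div hx.ne' hc.ne', hslope] at htangent
      have hc_le := hhat_le _ hc le_rfl
      rw [hdef] at hc_le ⊢
      linarith
  · rw [hlowdef, if_pos (le_div_self hy.le hβ0 hβ1), hhatdef, hdef]
    simp
end

section
/- Let A and B be d×d positive definite Hermitian matrices and λ ≥ 0 a real number. If Tr((A−B)B^{-1}(A−B)B^{-1}) ≤ λ² (i.e. ‖A−B‖_{B^{-1}} ≤ λ), then every eigenvalue of B^{-1/2} A B^{-1/2} lies in the interval [1−λ, 1+λ]. -/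
open Matrix
open scoped ComplexOrder

/-- Let `A, B` be PD Hermitian and `λ ≥ 0`. If
`Tr((A−B)B⁻¹(A−B)B⁻¹) ≤ λ²` (i.e. `‖A−B‖_{B⁻¹} ≤ λ`), then every eigenvalue of
`B^{-1/2} A B^{-1/2}` lies in `[1−λ, 1+λ]`.  Here `S` denotes the (unique) PD square
root `B^{1/2}` of `B`, so `B^{-1/2} A B^{-1/2} = S⁻¹ * A * S⁻¹`. -/
theorem stmt2 (d : ℕ) (A B S : Matrix (Fin d) (Fin d) ℂ) (lam : ℝ)
    (hA : A.PosDef) (hB : B.PosDef) (hlam : 0 ≤ lam)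
    (hS : S.PosDef) (hSB : S * S = B)
    (htr : ((A - B) * B⁻¹ * (A - B) * B⁻¹).trace.re ≤ lam ^ 2)
    (hM : (S⁻¹ * A * S⁻¹).IsHermitian) :
    ∀ i : Fin d, 1 - lam ≤ hM.eigenvalues i ∧ hM.eigenvalues i ≤ 1 + lam := by
  have hdet : IsUnit S.det := (isUnit_iff_isUnit_det S).mp hS.isUnit
  have hSi : S⁻¹ * S = 1 := nonsing_inv_mul S hdet
  have hiS : S * S⁻¹ = 1 := mul_nonsing_inv S hdet
  have hBinv : B⁻¹ = S⁻¹ * S⁻¹ := by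
    apply inv_eq_left_inv
    rw [← hSB, Matrix.mul_assoc, ← Matrix.mul_assoc S⁻¹ S S, hSi, Matrix.one_mul, hSi]
  set N : Matrix (Fin d) (Fin d) ℂ := S⁻¹ * A * S⁻¹ - 1 with hNdef
  have hSBS : S⁻¹ * B * S⁻¹ = 1 := by
    rw [← hSB, ← Matrix.mul_assoc, Matrix.mul_assoc _ S S⁻¹, hiS, Matrix.mul_one, hSi]
  have hN : N = S⁻¹ * (A - B) * S⁻¹ := by
    rw [hNdef, Matrix.mul_sub, Matrix.sub_mul, hSBS]
  -- trace identity
  have key : (N * N).trace = ((A - B) * B⁻¹ * (A - B) * B⁻¹).trace := by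
    rw [hN, hBinv]
    rw [show S⁻¹ * (A - B) * S⁻¹ * (S⁻¹ * (A - B) * S⁻¹)
        = S⁻¹ * ((A - B) * S⁻¹ * (S⁻¹ * ((A - B) * S⁻¹))) by
      simp only [Matrix.mul_assoc]]
    rw [trace_mul_comm]
    congr 1
    simp only [Matrix.mul_assoc]
  -- spectral theorem
  set μ := hM.eigenvalues with hμ
  set U : Matrix (Fin d) (Fin d) ℂ := ↑hM.eigenvectorUnitary with hUdef
  have hspec : S⁻¹ * A * S⁻¹
      = U * diagonal (fun i => (μ i : ℂ)) * star U := hM.spectral_theorem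
  have hUU : star U * U = 1 := UnitaryGroup.star_mul_self hM.eigenvectorUnitary
  have hUU' : U * star U = 1 := mul_eq_one_comm.mp hUU
  have hN2 : N = U * (diagonal (fun i => (μ i : ℂ) - 1)) * star U := by
    have hd : diagonal (fun i => (μ i : ℂ) - 1) = diagonal (fun i => (μ i : ℂ)) - 1 := by
      rw [← diagonal_one, diagonal_sub]
    rw [hNdef, hspec, hd, Matrix.mul_sub, Matrix.sub_mul, Matrix.mul_one, hUU']
  have htrN : (N * N).trace = ∑ i, ((μ i : ℂ) - 1) * ((μ i : ℂ) - 1) := by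
    rw [hN2]
    rw [show (U * diagonal (fun i => (μ i : ℂ) - 1) * star U) *
          (U * diagonal (fun i => (μ i : ℂ) - 1) * star U)
        = U * (diagonal (fun i => (μ i : ℂ) - 1) * ((star U * U) *
            (diagonal (fun i => (μ i : ℂ) - 1) * star U))) by
      simp only [Matrix.mul_assoc]]
    rw [hUU, Matrix.one_mul, trace_mul_comm]
    rw [show (diagonal (fun i => (μ i : ℂ) - 1) *
          (diagonal (fun i => (μ i : ℂ) - 1) * star U)) * U
        = diagonal (fun i => (μ i : ℂ) - 1) * diagonal (fun i => (μ i : ℂ) - 1)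
            * (star U * U) by simp only [Matrix.mul_assoc]]
    rw [hUU, Matrix.mul_one, diagonal_mul_diagonal, trace_diagonal]
  have hre : (N * N).trace.re = ∑ i, (μ i - 1) * (μ i - 1) := by
    rw [htrN]
    push_cast
    rw [Complex.re_sum]
    simp
  have hsum : ∑ i, (μ i - 1) * (μ i - 1) ≤ lam ^ 2 := by
    rw [← hre, key]; exact htr
  intro i
  have hterm : (μ i - 1) * (μ i - 1) ≤ lam ^ 2 := by
    refine le_trans (Finset.single_le_sum (fun j _ => mul_self_nonneg (μ j - 1))
      (Finset.mem_univ i)) hsum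
  constructor <;> nlinarith [mul_self_nonneg (μ i - 1)]
end

section
/- Let A and B be d×d positive definite Hermitian matrices and λ ≥ 0. Suppose that for every C in the segment [A,B] := {αA + (1−α)B : α ∈ [0,1]} one has Tr((A−B)C^{-1}(A−B)C^{-1}) ≤ λ². Then for all D, E ∈ [A,B]: D ⪯ (1+λ)E and D^{-1} ⪯ (1+λ)E^{-1}. -/
/-!
With `Δ = A - B`, two points of the segment differ by `tΔ` with `|t| ≤ 1`. The trace bound at
`C` says that `C^{-1/2} Δ C^{-1/2}` has Hilbert–Schmidt norm at most `λ`, so all its eigenvalues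
lie in `[-λ, λ]`, i.e. `-λC ⪯ Δ ⪯ λC`. Hence `D = E + tΔ ⪯ (1 + λ)E`, and the second inequality
follows from the first with `D` and `E` swapped, since inversion is operator antitone.
-/

open Matrix
open scoped ComplexOrder

lemma smul_le_of_le_of_neg_le {M : Type*} [AddCommGroup M] [PartialOrder M] [IsOrderedAddMonoid M]
    [Module ℝ M] [PosSMulMono ℝ M] {x c : M} (hx : x ≤ c) (hnx : -x ≤ c) {t : ℝ}
    (ht : |t| ≤ 1) : t • x ≤ c := by
  obtain ⟨ht₁, ht₂⟩ := abs_le.mp ht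
  calc t • x = ((1 + t) / 2) • x + ((1 - t) / 2) • -x := by module
    _ ≤ ((1 + t) / 2) • c + ((1 - t) / 2) • c := by gcongr; linarith
    _ = c := by module

namespace Matrix

open scoped MatrixOrder

variable {𝕜 n : Type*} [RCLike 𝕜]

lemma PosDef.smul_add_one_sub_smul {A B : Matrix n n 𝕜} (hA : A.PosDef) (hB : B.PosDef) {α : ℝ}
    (h₀ : 0 ≤ α) (h₁ : α ≤ 1) : (α • A + (1 - α) • B).PosDef := by
  rcases h₁.lt_or_eq with h₁ | rfl
  · exact PosDef.posSemidef_add (hA.posSemidef.smul h₀) (hB.smul (sub_pos.mpr h₁))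
  · simpa using hA

variable [Fintype n] [DecidableEq n]

lemma IsHermitian.re_trace_mul_self {A : Matrix n n 𝕜} (hA : A.IsHermitian) :
    RCLike.re (A * A).trace = ∑ i, hA.eigenvalues i ^ 2 := by
  conv_lhs => rw [hA.spectral_theorem, ← map_mul, Unitary.conjStarAlgAut_apply, trace_mul_cycle,
    Unitary.coe_star_mul_self, one_mul, diagonal_mul_diagonal, trace_diagonal]
  simp [sq]

lemma IsHermitian.le_smul_one_of_re_trace_mul_self_le {A : Matrix n n 𝕜} (hA : A.IsHermitian)
    {r : ℝ} (hr : 0 ≤ r) (h : RCLike.re (A * A).trace ≤ r ^ 2) : A ≤ r • 1 := by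
  rw [← Algebra.algebraMap_eq_smul_one, le_algebraMap_iff_spectrum_le hA.isSelfAdjoint,
    hA.spectrum_real_eq_range_eigenvalues]
  rintro _ ⟨i, rfl⟩
  refine (abs_le_of_sq_le_sq' ?_ hr).2
  rw [hA.re_trace_mul_self] at h
  exact (Finset.single_le_sum (fun j _ ↦ sq_nonneg (hA.eigenvalues j)) (Finset.mem_univ i)).trans h

lemma PosDef.le_smul_of_re_trace_le {C Δ : Matrix n n 𝕜} (hC : C.PosDef) (hΔ : Δ.IsHermitian)
    {r : ℝ} (hr : 0 ≤ r) (h : RCLike.re (Δ * C⁻¹ * Δ * C⁻¹).trace ≤ r ^ 2) : Δ ≤ r • C := by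
  set S := CFC.sqrt C
  have hS : S.PosDef := hC.isStrictlyPositive.sqrt.posDef
  have hSS : S * S = C := CFC.sqrt_mul_sqrt_self C hC.posSemidef.nonneg
  have hSdet : IsUnit S.det := (isUnit_iff_isUnit_det S).mp hS.isUnit
  have hM : (S⁻¹ * Δ * S⁻¹).IsHermitian := by
    simpa [hS.1.inv.eq, Matrix.mul_assoc] using isHermitian_mul_mul_conjTranspose S⁻¹ hΔ
  have hM_le : S⁻¹ * Δ * S⁻¹ ≤ r • 1 := hM.le_smul_one_of_re_trace_mul_self_le hr <| by
    convert h using 2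
    simp only [← hSS, mul_inv_rev, Matrix.mul_assoc]
    rw [trace_mul_comm]
    simp only [Matrix.mul_assoc]
  have hconj := star_left_conjugate_le_conjugate hM_le S
  rw [star_eq_conjTranspose, hS.1.eq] at hconj
  convert hconj using 1
  · simp only [← Matrix.mul_assoc, mul_nonsing_inv S hSdet, Matrix.one_mul]
    simp only [Matrix.mul_assoc, nonsing_inv_mul S hSdet, Matrix.mul_one]
  · simp [hSS]

lemma PosDef.add_smul_le_one_add_smul {C Δ : Matrix n n 𝕜} (hC : C.PosDef) (hΔ : Δ.IsHermitian)
    {r : ℝ} (hr : 0 ≤ r) (h : RCLike.re (Δ * C⁻¹ * Δ * C⁻¹).trace ≤ r ^ 2) {t : ℝ} (ht : |t| ≤ 1) :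
    C + t • Δ ≤ (1 + r) • C := by
  have hneg : RCLike.re (-Δ * C⁻¹ * -Δ * C⁻¹).trace ≤ r ^ 2 := by
    simpa only [neg_mul, mul_neg, neg_neg] using h
  have htΔ : t • Δ ≤ r • C := smul_le_of_le_of_neg_le (hC.le_smul_of_re_trace_le hΔ hr h)
    (hC.le_smul_of_re_trace_le hΔ.neg hr hneg) ht
  calc C + t • Δ ≤ C + r • C := by gcongr
    _ = (1 + r) • C := by module

lemma PosDef.inv_le_inv {A B : Matrix n n ℂ} (hA : A.PosDef) (hAB : A ≤ B) : B⁻¹ ≤ A⁻¹ := by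
  open scoped Matrix.Norms.L2Operator in
  simpa only [nonsing_inv_eq_ringInverse] using
    CStarAlgebra.ringInverse_le_ringInverse hAB hA.isStrictlyPositive

lemma PosDef.inv_le_smul_inv {A B : Matrix n n ℂ} (hA : A.PosDef) (hB : B.PosDef) {c : ℝ}
    (hc : 0 < c) (h : B ≤ c • A) : A⁻¹ ≤ c • B⁻¹ := by
  have hinv : (c • A)⁻¹ = c⁻¹ • A⁻¹ := by
    refine inv_eq_right_inv ?_
    rw [smul_mul_smul_comm, mul_inv_cancel₀ hc.ne', one_smul,
      mul_nonsing_inv A ((isUnit_iff_isUnit_det A).mp hA.isUnit)]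
  have := smul_le_smul_of_nonneg_left (hB.inv_le_inv h) hc.le
  rwa [hinv, smul_inv_smul₀ hc.ne'] at this

end Matrix

/-- Let `A, B` be PD Hermitian and `λ ≥ 0`. If for every `C = αA + (1−α)B`
with `α ∈ [0,1]` one has `Tr((A−B)C⁻¹(A−B)C⁻¹) ≤ λ²`, then for all
`D, E ∈ [A,B]` (the segment): `D ⪯ (1+λ)E` and `D⁻¹ ⪯ (1+λ)E⁻¹`. -/
theorem stmt3 (d : ℕ) (A B : Matrix (Fin d) (Fin d) ℂ) (lam : ℝ)
    (hA : A.PosDef) (hB : B.PosDef) (hlam : 0 ≤ lam)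
    (htr : ∀ α : ℝ, 0 ≤ α → α ≤ 1 →
      ((A - B) * (α • A + (1 - α) • B)⁻¹ * (A - B) * (α • A + (1 - α) • B)⁻¹).trace.re
        ≤ lam ^ 2) :
    ∀ αD αE : ℝ, 0 ≤ αD → αD ≤ 1 → 0 ≤ αE → αE ≤ 1 →
      ((1 + lam) • (αE • A + (1 - αE) • B) - (αD • A + (1 - αD) • B)).PosSemidef ∧
      ((1 + lam) • (αE • A + (1 - αE) • B)⁻¹ - (αD • A + (1 - αD) • B)⁻¹).PosSemidef := by
  intro αD αE hD₀ hD₁ hE₀ hE₁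
  open scoped MatrixOrder in
  have hle (β γ : ℝ) (hβ₀ : 0 ≤ β) (hβ₁ : β ≤ 1) (hγ₀ : 0 ≤ γ) (hγ₁ : γ ≤ 1) :
      β • A + (1 - β) • B ≤ (1 + lam) • (γ • A + (1 - γ) • B) := by
    convert (hA.smul_add_one_sub_smul hB hγ₀ hγ₁).add_smul_le_one_add_smul (hA.1.sub hB.1) hlam
      (htr γ hγ₀ hγ₁) (t := β - γ) (abs_sub_le_iff.mpr ⟨by linarith, by linarith⟩) using 1
    module
  exact ⟨hle αD αE hD₀ hD₁ hE₀ hE₁,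
    (hA.smul_add_one_sub_smul hB hD₀ hD₁).inv_le_smul_inv (hA.smul_add_one_sub_smul hB hE₀ hE₁)
      (by linarith) (hle αE αD hE₀ hE₁ hD₀ hD₁)⟩
end

section
/- Let X be a d×d positive definite Hermitian matrix and P a d×d positive semidefinite Hermitian matrix, and let P' := P + X^{-1/2}(I_d − X^{1/2} P X^{1/2})_+ X^{-1/2}. Then P' ⪰ P and P' ⪰ X^{-1}. -/
open Matrix
open scoped ComplexOrder

/-- The positive part `M₊` of a Hermitian matrix: keep the spectral decomposition but set
all negative eigenvalues to zero (junk value `0` if `M` is not Hermitian). -/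
noncomputable def matPosPart {d : ℕ} (M : Matrix (Fin d) (Fin d) ℂ) :
    Matrix (Fin d) (Fin d) ℂ :=
  if hM : M.IsHermitian then
    (hM.eigenvectorUnitary : Matrix (Fin d) (Fin d) ℂ) *
      Matrix.diagonal (fun i => ((max (hM.eigenvalues i) 0 : ℝ) : ℂ)) *
      star (hM.eigenvectorUnitary : Matrix (Fin d) (Fin d) ℂ)
  else 0

/-! Both `P' - P` and `P' - X⁻¹` are congruences `S⁻¹ * A * S⁻¹` of a positive semidefinite
matrix: `A = M₊` for the first, and `A = M₊ - M` for the second, where `M = 1 - S P S`, since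
`S⁻¹ M S⁻¹ = X⁻¹ - P`. Both `M₊` and `M₊ - M` are diagonal with nonnegative entries
`max λ 0` and `max λ 0 - λ` in the eigenbasis of `M`. -/

section PosPart

variable {d : ℕ} {M : Matrix (Fin d) (Fin d) ℂ}

lemma posSemidef_matPosPart (hM : M.IsHermitian) : (matPosPart M).PosSemidef := by
  rw [matPosPart, dif_pos hM, star_eq_conjTranspose]
  exact (posSemidef_diagonal_iff.mpr fun i => by positivity).mul_mul_conjTranspose_same _

lemma posSemidef_matPosPart_sub_self (hM : M.IsHermitian) :
    (matPosPart M - M).PosSemidef := by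
  set U : Matrix (Fin d) (Fin d) ℂ := (hM.eigenvectorUnitary : Matrix (Fin d) (Fin d) ℂ)
  have hdiff : matPosPart M - M = U * diagonal (fun i =>
      ((max (hM.eigenvalues i) 0 - hM.eigenvalues i : ℝ) : ℂ)) * Uᴴ := by
    rw [matPosPart, dif_pos hM]
    conv_lhs => arg 2; rw [hM.spectral_theorem]
    simp only [Complex.ofReal_sub, ← diagonal_sub, mul_sub, sub_mul, star_eq_conjTranspose]
    rfl
  rw [hdiff]
  refine (posSemidef_diagonal_iff.mpr fun i => ?_).mul_mul_conjTranspose_same _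
  exact_mod_cast sub_nonneg.mpr (le_max_left _ _)

end PosPart

lemma inv_mul_one_sub_mul_mul_inv {n R : Type*} [Fintype n] [DecidableEq n] [CommRing R]
    {S : Matrix n n R} (hS : IsUnit S.det) (P : Matrix n n R) :
    S⁻¹ * (1 - S * P * S) * S⁻¹ = (S * S)⁻¹ - P := by
  rw [Matrix.mul_inv_rev, mul_sub, sub_mul, mul_one, ← mul_assoc, ← mul_assoc, nonsing_inv_mul S hS,
    one_mul, mul_assoc, mul_nonsing_inv S hS, mul_one]

theorem stmt4_general (d : ℕ) (X P S P' : Matrix (Fin d) (Fin d) ℂ)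
    (hP : P.PosSemidef)
    (hS : S.PosDef) (hSX : S * S = X)
    (hP' : P' = P + S⁻¹ * matPosPart (1 - S * P * S) * S⁻¹) :
    (P' - P).PosSemidef ∧ (P' - X⁻¹).PosSemidef := by
  set M := 1 - S * P * S
  have hSinv : (S⁻¹)ᴴ = S⁻¹ := hS.isHermitian.inv.eq
  have hM : M.IsHermitian := isHermitian_one.sub <| by
    simp only [IsHermitian, conjTranspose_mul, hS.isHermitian.eq, hP.isHermitian.eq, mul_assoc]
  have hcongr : S⁻¹ * M * S⁻¹ = X⁻¹ - P := by
    rw [inv_mul_one_sub_mul_mul_inv hS.det_pos.ne'.isUnit, hSX]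
  constructor
  · have hdiff : P' - P = S⁻¹ * matPosPart M * (S⁻¹)ᴴ := by
      rw [hSinv, hP', add_sub_cancel_left]
    exact hdiff ▸ (posSemidef_matPosPart hM).mul_mul_conjTranspose_same _
  · have hdiff : P' - X⁻¹ = S⁻¹ * (matPosPart M - M) * (S⁻¹)ᴴ := by
      rw [hSinv, mul_sub, sub_mul, hcongr, hP']
      abel
    exact hdiff ▸ (posSemidef_matPosPart_sub_self hM).mul_mul_conjTranspose_same _

/-- Let `X` be PD Hermitian, `P` PSD Hermitian, and
`P' := P + X^{-1/2}(I − X^{1/2} P X^{1/2})₊ X^{-1/2}`. Then `P' ⪰ P` and `P' ⪰ X⁻¹`.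
Here `S` denotes the (unique) PD square root `X^{1/2}` of `X`. -/
theorem stmt4 (d : ℕ) (X P S P' : Matrix (Fin d) (Fin d) ℂ)
    (hX : X.PosDef) (hP : P.PosSemidef)
    (hS : S.PosDef) (hSX : S * S = X)
    (hP' : P' = P + S⁻¹ * matPosPart (1 - S * P * S) * S⁻¹) :
    (P' - P).PosSemidef ∧ (P' - X⁻¹).PosSemidef :=
  stmt4_general d X P S P' hP hS hSX hP'
end

section
/- Let X and Y be d×d positive definite Hermitian matrices and P a d×d positive semidefinite Hermitian matrix with P ⪰ X^{-1}, and let P' := P + Y^{-1/2}(I_d − Y^{1/2} P Y^{1/2})_+ Y^{-1/2}. Then ‖P' − P‖_Y ≤ ‖Y − X‖_{X^{-1}}, i.e. Tr((P'−P)Y(P'−P)Y) ≤ Tr((Y−X)X^{-1}(Y−X)X^{-1}). -/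
open Matrix
open scoped ComplexOrder

/-
With `S = Y^{1/2}`, conjugation by `S` turns the left side into `Tr (A²)` with `A = M₊`,
`M = 1 - S P S`, and the right side into `Tr (K²)` with `K = 1 - S X⁻¹ S`; the hypothesis
`X⁻¹ ⪯ P` says exactly `M ⪯ K`. Since `A M = A²` and `A ⪰ 0`, `Tr (A²) = Tr (A M) ≤ Tr (A K)`,
and combined with `0 ≤ Tr ((A - K)²) = Tr (A²) - 2 Tr (A K) + Tr (K²)` this gives
`Tr (A²) ≤ Tr (K²)`.
-/

namespace Matrix

variable {𝕜 n : Type*} [RCLike 𝕜] [Fintype n]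

lemma IsHermitian.trace_mul_self_nonneg {A : Matrix n n 𝕜} (hA : A.IsHermitian) :
    0 ≤ (A * A).trace := by
  simpa only [hA.eq] using (posSemidef_conjTranspose_mul_self A).trace_nonneg

lemma PosSemidef.trace_mul_nonneg [DecidableEq n] {A B : Matrix n n 𝕜}
    (hA : A.PosSemidef) (hB : B.PosSemidef) : 0 ≤ (A * B).trace := by
  open scoped MatrixOrder in
  obtain ⟨R, rfl⟩ := CStarAlgebra.nonneg_iff_eq_star_mul_self.mp hA.nonneg
  rw [Matrix.mul_assoc, trace_mul_comm, Matrix.mul_assoc, ← Matrix.mul_assoc,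
    star_eq_conjTranspose]
  exact (hB.mul_mul_conjTranspose_same R).trace_nonneg

end Matrix

section PosPart

variable {d : ℕ} {M : Matrix (Fin d) (Fin d) ℂ}

lemma matPosPart_mul_eq_mul_matPosPart (hM : M.IsHermitian) :
    matPosPart M * M = matPosPart M * matPosPart M := by
  have hA : matPosPart M = Unitary.conjStarAlgAut ℂ _ hM.eigenvectorUnitary
      (diagonal fun i => ((max (hM.eigenvalues i) 0 : ℝ) : ℂ)) := by
    rw [matPosPart, dif_pos hM, Unitary.conjStarAlgAut_apply]
  have hMU := hM.spectral_theorem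
  -- hide the dependence on `hM`, so that `M` itself can be rewritten
  set U := hM.eigenvectorUnitary
  set ev := hM.eigenvalues
  rw [hA, hMU, ← map_mul, ← map_mul, diagonal_mul_diagonal, diagonal_mul_diagonal]
  congr 2
  ext i
  simpa using le_total 0 (ev i)

end PosPart

lemma re_trace_matPosPart_mul_self_le {d : ℕ} {M K : Matrix (Fin d) (Fin d) ℂ}
    (hM : M.IsHermitian) (hK : K.IsHermitian) (hMK : (K - M).PosSemidef) :
    (matPosPart M * matPosPart M).trace.re ≤ (K * K).trace.re := by
  set A := matPosPart M
  have hA : A.PosSemidef := posSemidef_matPosPart hM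
  have hAK : (A * A).trace.re ≤ (A * K).trace.re := by
    have h := (Complex.nonneg_iff.mp (hA.trace_mul_nonneg hMK)).1
    rw [Matrix.mul_sub, matPosPart_mul_eq_mul_matPosPart hM, trace_sub, Complex.sub_re] at h
    linarith
  have hAK_sq : 0 ≤ ((A - K) * (A - K)).trace.re :=
    (Complex.nonneg_iff.mp (hA.isHermitian.sub hK).trace_mul_self_nonneg).1
  have hexpand : ((A - K) * (A - K)).trace.re =
      (A * A).trace.re - 2 * (A * K).trace.re + (K * K).trace.re := by
    rw [sub_mul, Matrix.mul_sub, Matrix.mul_sub, trace_sub, trace_sub, trace_sub,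
      trace_mul_comm K A]
    simp only [Complex.sub_re]
    ring
  linarith

theorem stmt6_general (d : ℕ) (X Y P S P' : Matrix (Fin d) (Fin d) ℂ)
    (hX : X.PosDef) (hP : P.PosSemidef)
    (hPX : (P - X⁻¹).PosSemidef)
    (hS : S.PosDef) (hSY : S * S = Y)
    (hP' : P' = P + S⁻¹ * matPosPart (1 - S * P * S) * S⁻¹) :
    ((P' - P) * Y * (P' - P) * Y).trace.re ≤
      ((Y - X) * X⁻¹ * (Y - X) * X⁻¹).trace.re := by
  subst hSY hP'
  have hS_det : IsUnit S.det := (isUnit_iff_isUnit_det S).mp hS.isUnit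
  have hX_det : IsUnit X.det := (isUnit_iff_isUnit_det X).mp hX.isUnit
  set A := matPosPart (1 - S * P * S)
  set K := 1 - S * X⁻¹ * S
  have hM : (1 - S * P * S).IsHermitian := isHermitian_one.sub <| by
    simpa only [hS.isHermitian.eq] using (hP.mul_mul_conjTranspose_same S).isHermitian
  have hK : K.IsHermitian := isHermitian_one.sub <| by
    simpa only [hS.isHermitian.eq] using isHermitian_conjTranspose_mul_mul S hX.isHermitian.inv
  have hMK : (K - (1 - S * P * S)).PosSemidef := by
    convert hPX.mul_mul_conjTranspose_same S using 1
    rw [hS.isHermitian.eq]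
    simp only [K]
    noncomm_ring
  have hlhs : ((P + S⁻¹ * A * S⁻¹ - P) * (S * S) * (P + S⁻¹ * A * S⁻¹ - P) * (S * S)).trace =
      (A * A).trace := by
    rw [add_sub_cancel_left]
    simp only [Matrix.mul_assoc, nonsing_inv_mul_cancel_left S _ hS_det,
      mul_nonsing_inv_cancel_left S _ hS_det]
    rw [← Matrix.mul_assoc A, ← Matrix.mul_assoc, trace_conj' hS.isUnit]
  have hrhs : ((S * S - X) * X⁻¹ * (S * S - X) * X⁻¹).trace = (K * K).trace := by
    have hconj : (S * S - X) * X⁻¹ = S * -K * S⁻¹ := by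
      simp only [K, neg_sub, Matrix.mul_sub, Matrix.sub_mul, Matrix.mul_one, Matrix.mul_assoc,
        mul_nonsing_inv _ hS_det, mul_nonsing_inv _ hX_det]
    rw [Matrix.mul_assoc _ (S * S - X), hconj]
    simp only [Matrix.mul_assoc, nonsing_inv_mul_cancel_left S _ hS_det, neg_mul, mul_neg, neg_neg]
    rw [← Matrix.mul_assoc K, ← Matrix.mul_assoc, trace_conj hS.isUnit]
  rw [hlhs, hrhs]
  exact re_trace_matPosPart_mul_self_le hM hK hMK

/-- Let `X, Y` be PD Hermitian and `P` PSD Hermitian with `P ⪰ X⁻¹`, and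
`P' := P + Y^{-1/2}(I − Y^{1/2} P Y^{1/2})₊ Y^{-1/2}`. Then `‖P' − P‖_Y ≤ ‖Y − X‖_{X⁻¹}`,
i.e. `Tr((P'−P)Y(P'−P)Y) ≤ Tr((Y−X)X⁻¹(Y−X)X⁻¹)`. Here `S` denotes the (unique) PD
square root `Y^{1/2}` of `Y`. -/
theorem stmt6 (d : ℕ) (X Y P S P' : Matrix (Fin d) (Fin d) ℂ)
    (hX : X.PosDef) (hY : Y.PosDef) (hP : P.PosSemidef)
    (hPX : (P - X⁻¹).PosSemidef)
    (hS : S.PosDef) (hSY : S * S = Y)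
    (hP' : P' = P + S⁻¹ * matPosPart (1 - S * P * S) * S⁻¹) :
    ((P' - P) * Y * (P' - P) * Y).trace.re ≤
      ((Y - X) * X⁻¹ * (Y - X) * X⁻¹).trace.re :=
  stmt6_general d X Y P S P' hX hP hPX hS hSY hP'
end

section
/- Let λ ≥ 0, let X and X' be d×d positive definite Hermitian matrices and P a d×d positive semidefinite Hermitian matrix with P ⪰ X^{-1} and X'^{-1} ⪯ (1+λ) X^{-1}, and let P' := P + X'^{-1/2}(I_d − X'^{1/2} P X'^{1/2})_+ X'^{-1/2}. Then P' ⪯ (1+λ) P. -/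
/-!
Put `M = S P S` with `S = X'^{1/2}`. The hypotheses give `X'⁻¹ ⪯ (1 + λ) P`, and conjugating by
`S` turns this into `I ⪯ (1 + λ) M`: every eigenvalue `x` of `M` has `(1 + λ) x ≥ 1`. For such `x`,
`max (1 - x) 0 ≤ λ x`, so the functional calculus gives `(I - M)₊ ⪯ λ M`, and conjugating back by
`S⁻¹` gives `P' - P ⪯ λ P`.
-/

open Matrix
open scoped ComplexOrder

open scoped MatrixOrder

lemma matPosPart_eq_cfc {d : ℕ} {M : Matrix (Fin d) (Fin d) ℂ} (hM : M.IsHermitian) :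
    matPosPart M = cfc (fun x : ℝ => max x 0) M := by
  rw [hM.cfc_eq, IsHermitian.cfc, Unitary.conjStarAlgAut_apply, matPosPart, dif_pos hM]
  rfl

lemma matPosPart_one_sub_le_smul {d : ℕ} {M : Matrix (Fin d) (Fin d) ℂ} (hM : M.IsHermitian)
    {lam : ℝ} (hlam : 0 ≤ lam) (h : 1 ≤ (1 + lam) • M) : matPosPart (1 - M) ≤ lam • M := by
  have hM' : IsSelfAdjoint M := hM
  have hsmul (c : ℝ) : c • M = cfc (fun x : ℝ => c * x) M := by
    rw [cfc_const_mul c (fun x : ℝ => x) M, cfc_id' ℝ M]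
  have hone : (1 : Matrix (Fin d) (Fin d) ℂ) = cfc (fun _ : ℝ => (1 : ℝ)) M := by
    rw [cfc_const (1 : ℝ) M, map_one]
  have hspec : ∀ x ∈ spectrum ℝ M, 1 ≤ (1 + lam) * x := by
    rw [hsmul, hone] at h
    exact (cfc_le_iff _ _ M).mp h
  have hsub : 1 - M = cfc (fun x : ℝ => 1 - x) M := by
    rw [cfc_sub (fun _ : ℝ => (1 : ℝ)) (fun x : ℝ => x) M, ← hone, cfc_id' ℝ M]
  rw [matPosPart_eq_cfc (isHermitian_one.sub hM), hsub, ← cfc_comp (fun x : ℝ => max x 0) _ M,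
    hsmul]
  refine (cfc_le_iff _ _ M).mpr fun x hx => ?_
  exact max_le (by nlinarith [hspec x hx]) (by nlinarith [hspec x hx])

theorem stmt7_general (d : ℕ) (lam : ℝ) (X X' P S P' : Matrix (Fin d) (Fin d) ℂ)
    (hlam : 0 ≤ lam)
    (hP : P.PosSemidef)
    (hPX : (P - X⁻¹).PosSemidef)
    (hXX' : ((1 + lam) • X⁻¹ - X'⁻¹).PosSemidef)
    (hS : S.PosDef) (hSX' : S * S = X')
    (hP' : P' = P + S⁻¹ * matPosPart (1 - S * P * S) * S⁻¹) :
    ((1 + lam) • P - P').PosSemidef := by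
  have hSS : S⁻¹ * S = 1 := nonsing_inv_mul S (isUnit_iff_isUnit_det S |>.mp hS.isUnit)
  have hSS' : S * S⁻¹ = 1 := mul_nonsing_inv S (isUnit_iff_isUnit_det S |>.mp hS.isUnit)
  have hX'P : X'⁻¹ ≤ (1 + lam) • P := by
    rw [le_iff, show (1 + lam) • P - X'⁻¹ = (1 + lam) • (P - X⁻¹) + ((1 + lam) • X⁻¹ - X'⁻¹) by
      module]
    exact (hPX.smul (by positivity)).add hXX'
  have hSPS : 1 ≤ (1 + lam) • (S * P * S) := by
    have h := hS.1.isSelfAdjoint.conjugate_le_conjugate hX'P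
    rwa [← hSX', Matrix.mul_inv_rev, mul_assoc, mul_assoc S⁻¹, hSS, mul_one, hSS', Matrix.mul_smul,
      Matrix.smul_mul] at h
  have hkey := hS.1.inv.isSelfAdjoint.conjugate_le_conjugate
    (matPosPart_one_sub_le_smul (hP.1.isSelfAdjoint.conjugate_self hS.1.isSelfAdjoint) hlam hSPS)
  rw [hP', ← le_iff, add_smul, one_smul]
  refine add_le_add_right (hkey.trans_eq ?_) P
  rw [Matrix.mul_smul, Matrix.smul_mul,
    show S⁻¹ * (S * P * S) * S⁻¹ = (S⁻¹ * S) * P * (S * S⁻¹) by noncomm_ring, hSS, hSS', one_mul,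
    mul_one]

/-- Let `λ ≥ 0`, let `X, X'` be PD Hermitian and `P` PSD Hermitian with
`P ⪰ X⁻¹` and `X'⁻¹ ⪯ (1+λ)X⁻¹`, and let
`P' := P + X'^{-1/2}(I − X'^{1/2} P X'^{1/2})₊ X'^{-1/2}`. Then `P' ⪯ (1+λ)P`.
Here `S` denotes the (unique) PD square root `X'^{1/2}` of `X'`. -/
theorem stmt7 (d : ℕ) (lam : ℝ) (X X' P S P' : Matrix (Fin d) (Fin d) ℂ)
    (hlam : 0 ≤ lam)
    (hX : X.PosDef) (hX' : X'.PosDef) (hP : P.PosSemidef)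
    (hPX : (P - X⁻¹).PosSemidef)
    (hXX' : ((1 + lam) • X⁻¹ - X'⁻¹).PosSemidef)
    (hS : S.PosDef) (hSX' : S * S = X')
    (hP' : P' = P + S⁻¹ * matPosPart (1 - S * P * S) * S⁻¹) :
    ((1 + lam) • P - P').PosSemidef :=
  stmt7_general d lam X X' P S P' hlam hP hPX hXX' hS hSX' hP'
end

section
/- Let X₁ ⪯ X₂ ⪯ ⋯ ⪯ X_T be d×d positive definite Hermitian matrices. Then Σ_{t=1}^{T−1} Tr(X_{t+1}^{-1}(X_{t+1} − X_t)) ≤ log det(X_T) − log det(X₁). -/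
/-!
With `S = B^{-1/2}`, the matrix `M = S A S` is positive definite with `Tr(B⁻¹ (B - A)) = d - Tr M`
and `det M = det A / det B`. Applying `log μ ≤ μ - 1` to the eigenvalues `μ` of `M` gives
`Tr(B⁻¹ (B - A)) ≤ log det B - log det A` for any two positive definite `A, B`; the theorem is the
telescoping sum of these bounds.
-/

open Matrix
open scoped ComplexOrder

namespace Matrix

variable {n 𝕜 : Type*} [Fintype n] [DecidableEq n] [RCLike 𝕜]

lemma PosDef.log_det_le_trace_sub_card {M : Matrix n n 𝕜} (hM : M.PosDef) :
    Real.log (RCLike.re M.det) ≤ RCLike.re M.trace - Fintype.card n := by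
  set μ := hM.isHermitian.eigenvalues
  have hdet : RCLike.re M.det = ∏ i, μ i := by
    rw [hM.isHermitian.det_eq_prod_eigenvalues, ← RCLike.ofReal_prod, RCLike.ofReal_re]
  have htrace : RCLike.re M.trace = ∑ i, μ i := by
    rw [hM.isHermitian.trace_eq_sum_eigenvalues, ← RCLike.ofReal_sum, RCLike.ofReal_re]
  rw [hdet, htrace, Real.log_prod fun i _ => (hM.eigenvalues_pos i).ne', Finset.card_univ.symm,
    Finset.card_eq_sum_ones, Nat.cast_sum, Nat.cast_one, ← Finset.sum_sub_distrib]
  exact Finset.sum_le_sum fun i _ => Real.log_le_sub_one_of_pos (hM.eigenvalues_pos i)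

lemma PosDef.re_det_pos {A : Matrix n n 𝕜} (hA : A.PosDef) : 0 < RCLike.re A.det :=
  (RCLike.pos_iff.mp hA.det_pos).1

lemma PosDef.ofReal_re_det {A : Matrix n n 𝕜} (hA : A.PosDef) : (RCLike.re A.det : 𝕜) = A.det := by
  obtain ⟨x, -, hx⟩ := RCLike.pos_iff_exists_ofReal.mp hA.det_pos
  rw [← hx, RCLike.ofReal_re]

open scoped MatrixOrder in
lemma PosDef.trace_inv_mul_sub_le_log_det_sub_log_det {A B : Matrix n n 𝕜} (hA : A.PosDef)
    (hB : B.PosDef) :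
    RCLike.re (B⁻¹ * (B - A)).trace ≤ Real.log (RCLike.re B.det) - Real.log (RCLike.re A.det) := by
  set S := CFC.sqrt B⁻¹
  have hSS : S * S = B⁻¹ := CFC.sqrt_mul_sqrt_self _ hB.inv.posSemidef.nonneg
  have hS : S.PosSemidef := (CFC.sqrt_nonneg _).posSemidef
  have hSunit : IsUnit S := CFC.isUnit_sqrt_iff_isStrictlyPositive.mpr hB.inv.isStrictlyPositive
  have hM : (S * A * S).PosDef := by
    have hpsd := hA.posSemidef.mul_mul_conjTranspose_same S
    rw [hS.isHermitian.eq] at hpsd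
    exact hpsd.posDef_iff_isUnit.mpr ((hSunit.mul hA.isUnit).mul hSunit)
  have htrace : (B⁻¹ * (B - A)).trace = Fintype.card n - (S * A * S).trace := by
    rw [Matrix.mul_sub, nonsing_inv_mul B hB.det_pos.ne'.isUnit, trace_sub, trace_one,
      trace_mul_cycle, hSS]
  have hdet : RCLike.re (S * A * S).det = RCLike.re A.det / RCLike.re B.det := by
    apply RCLike.ofReal_injective (K := 𝕜)
    rw [hM.ofReal_re_det, RCLike.ofReal_div, hA.ofReal_re_det, hB.ofReal_re_det, det_mul, det_mul,
      mul_comm S.det, mul_assoc, ← det_mul, hSS, det_nonsing_inv, Ring.inverse_eq_inv, div_eq_mul_inv]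
  have hlog := hM.log_det_le_trace_sub_card
  rw [hdet, Real.log_div hA.re_det_pos.ne' hB.re_det_pos.ne'] at hlog
  rw [htrace, map_sub, RCLike.natCast_re]
  linarith

end Matrix

theorem stmt8_general (d T : ℕ) (hT : 1 ≤ T) (X : ℕ → Matrix (Fin d) (Fin d) ℂ)
    (hpd : ∀ t, 1 ≤ t → t ≤ T → (X t).PosDef) :
    ∑ t ∈ Finset.Icc 1 (T - 1), ((X (t + 1))⁻¹ * (X (t + 1) - X t)).trace.re ≤
      Real.log (X T).det.re - Real.log (X 1).det.re := by
  have hIcc : Finset.Icc 1 (T - 1) = Finset.Ico 1 T := by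
    ext t
    simp only [Finset.mem_Icc, Finset.mem_Ico]
    omega
  calc ∑ t ∈ Finset.Icc 1 (T - 1), ((X (t + 1))⁻¹ * (X (t + 1) - X t)).trace.re
      ≤ ∑ t ∈ Finset.Ico 1 T, (Real.log (X (t + 1)).det.re - Real.log (X t).det.re) := by
        rw [hIcc]
        refine Finset.sum_le_sum fun t ht => ?_
        obtain ⟨h1t, htT⟩ := Finset.mem_Ico.mp ht
        exact (hpd t h1t htT.le).trace_inv_mul_sub_le_log_det_sub_log_det (hpd (t + 1) (by omega) htT)
    _ = Real.log (X T).det.re - Real.log (X 1).det.re :=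
        Finset.sum_Ico_sub (fun t => Real.log (X t).det.re) hT

/-- Let `X₁ ⪯ X₂ ⪯ ⋯ ⪯ X_T` be PD Hermitian matrices. Then
`Σ_{t=1}^{T−1} Tr(X_{t+1}⁻¹(X_{t+1} − X_t)) ≤ log det(X_T) − log det(X₁)`. -/
theorem stmt8 (d T : ℕ) (hT : 1 ≤ T) (X : ℕ → Matrix (Fin d) (Fin d) ℂ)
    (hpd : ∀ t, 1 ≤ t → t ≤ T → (X t).PosDef)
    (hmono : ∀ t, 1 ≤ t → t < T → (X (t + 1) - X t).PosSemidef) :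
    ∑ t ∈ Finset.Icc 1 (T - 1), ((X (t + 1))⁻¹ * (X (t + 1) - X t)).trace.re ≤
      Real.log (X T).det.re - Real.log (X 1).det.re :=
  stmt8_general d T hT X hpd
end

section
/- Let X be a d×d positive definite Hermitian matrix and M a d×d Hermitian matrix. Then: (i) if Tr(X) ≤ 1, then Tr(M X^{-1} M X^{-1}) ≥ Tr(M²) (the squared Frobenius norm of M); and (ii) if M ≠ 0, then Tr(M X^{-1} M X^{-1}) > 0 (for any PD X, with no trace restriction). -/
/-!
Diagonalise `X = U diag(λ) U*` and put `A = U* M U`, again Hermitian. Then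
`Tr(M X⁻¹ M X⁻¹) = ∑ᵢⱼ |Aᵢⱼ|² / (λᵢ λⱼ)` and `Tr(M²) = ∑ᵢⱼ |Aᵢⱼ|²`. The eigenvalues are positive
and sum to `Tr X`, so `Tr X ≤ 1` makes every weight `1 / (λᵢ λⱼ)` at least `1`; and since all the
weights are positive, the first sum vanishes only when `A = 0`, that is, when `M = 0`.
-/

open Matrix Unitary
open scoped ComplexOrder

namespace Matrix

variable {n 𝕜 : Type*} [Fintype n] [RCLike 𝕜]

lemma sum_sum_norm_sq_le_sum_sum_mul_norm_sq (A : Matrix n n 𝕜) {w : n → ℝ}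
    (hw : ∀ i, 1 ≤ w i) :
    ∑ i, ∑ j, ‖A i j‖ ^ 2 ≤ ∑ i, ∑ j, w i * w j * ‖A i j‖ ^ 2 := by
  gcongr with i _ j _
  exact le_mul_of_one_le_left (by positivity) (one_le_mul_of_one_le_of_one_le (hw i) (hw j))

lemma sum_sum_mul_norm_sq_pos {A : Matrix n n 𝕜} (hA : A ≠ 0) {w : n → ℝ} (hw : ∀ i, 0 < w i) :
    0 < ∑ i, ∑ j, w i * w j * ‖A i j‖ ^ 2 := by
  obtain ⟨i, j, hij⟩ : ∃ i j, A i j ≠ 0 := by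
    by_contra! h
    exact hA (ext h)
  have hterm (k l : n) : 0 ≤ w k * w l * ‖A k l‖ ^ 2 := by
    have := hw k
    have := hw l
    positivity
  refine Finset.sum_pos' (fun k _ => Finset.sum_nonneg fun l _ => hterm k l) ⟨i, by simp, ?_⟩
  refine Finset.sum_pos' (fun l _ => hterm i l) ⟨j, by simp, ?_⟩
  have := hw i
  have := hw j
  positivity

variable [DecidableEq n]

lemma IsHermitian.re_trace_mul_diagonal_mul_mul_diagonal {A : Matrix n n 𝕜}
    (hA : A.IsHermitian) (w : n → ℝ) :
    RCLike.re (A * diagonal (RCLike.ofReal ∘ w) * A * diagonal (RCLike.ofReal ∘ w)).trace =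
      ∑ i, ∑ j, w i * w j * ‖A i j‖ ^ 2 := by
  rw [Matrix.mul_assoc (A * _)]
  simp only [trace, diag_apply, mul_apply, diagonal_apply, mul_ite, mul_zero, Finset.sum_ite_eq',
    Finset.mem_univ, if_true, map_sum, Function.comp_apply]
  refine Finset.sum_congr rfl fun i _ => Finset.sum_congr rfl fun j _ => ?_
  rw [← hA.apply j i, mul_mul_mul_comm, RCLike.star_def, RCLike.mul_conj]
  norm_cast
  ring

lemma trace_conjStarAlgAut (U : unitary (Matrix n n 𝕜)) (B : Matrix n n 𝕜) :
    (conjStarAlgAut 𝕜 _ U B).trace = B.trace := by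
  rw [conjStarAlgAut_apply, trace_mul_cycle, coe_star_mul_self, one_mul]

lemma IsHermitian.re_trace_mul_conjStarAlgAut_diagonal_mul {M : Matrix n n 𝕜}
    (hM : M.IsHermitian) (U : unitary (Matrix n n 𝕜)) (w : n → ℝ) :
    RCLike.re (M * conjStarAlgAut 𝕜 _ U (diagonal (RCLike.ofReal ∘ w)) *
        M * conjStarAlgAut 𝕜 _ U (diagonal (RCLike.ofReal ∘ w))).trace =
      ∑ i, ∑ j, w i * w j * ‖(star (U : Matrix n n 𝕜) * M * U) i j‖ ^ 2 := by
  set φ := conjStarAlgAut 𝕜 (Matrix n n 𝕜) U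
  have hA : (φ.symm M).IsHermitian := (hM.isSelfAdjoint.map φ.symm).isHermitian
  conv_lhs => rw [← φ.apply_symm_apply M, ← map_mul, ← map_mul, ← map_mul, trace_conjStarAlgAut,
    hA.re_trace_mul_diagonal_mul_mul_diagonal]
  rw [conjStarAlgAut_symm_apply]

lemma IsHermitian.re_trace_mul_self_s11 {M : Matrix n n 𝕜} (hM : M.IsHermitian)
    (U : unitary (Matrix n n 𝕜)) :
    RCLike.re (M * M).trace = ∑ i, ∑ j, ‖(star (U : Matrix n n 𝕜) * M * U) i j‖ ^ 2 := by
  simpa using hM.re_trace_mul_conjStarAlgAut_diagonal_mul U 1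

lemma inv_conjStarAlgAut_diagonal (U : unitary (Matrix n n 𝕜)) {w : n → ℝ}
    (hw : ∀ i, w i ≠ 0) :
    (conjStarAlgAut 𝕜 _ U (diagonal (RCLike.ofReal ∘ w)))⁻¹ =
      conjStarAlgAut 𝕜 _ U (diagonal (RCLike.ofReal ∘ w⁻¹)) := by
  refine inv_eq_left_inv ?_
  have hdiag : (fun i => (RCLike.ofReal ∘ w⁻¹) i * (RCLike.ofReal ∘ w) i : n → 𝕜) =
      fun _ => 1 := by
    ext i
    simp [hw i]
  rw [← map_mul, diagonal_mul_diagonal, hdiag, diagonal_one, map_one]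

lemma PosSemidef.eigenvalues_le_re_trace {X : Matrix n n 𝕜} (hX : X.PosSemidef) (i : n) :
    hX.1.eigenvalues i ≤ RCLike.re X.trace := by
  rw [hX.1.trace_eq_sum_eigenvalues, map_sum]
  simp only [RCLike.ofReal_re]
  exact Finset.single_le_sum (fun j _ => hX.eigenvalues_nonneg j) (Finset.mem_univ i)

lemma PosDef.re_trace_mul_inv_mul_mul_inv {X M : Matrix n n 𝕜} (hX : X.PosDef)
    (hM : M.IsHermitian) :
    RCLike.re (M * X⁻¹ * M * X⁻¹).trace = ∑ i, ∑ j, (hX.1.eigenvalues i)⁻¹ *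
      (hX.1.eigenvalues j)⁻¹ * ‖(star (hX.1.eigenvectorUnitary : Matrix n n 𝕜) * M *
        hX.1.eigenvectorUnitary) i j‖ ^ 2 := by
  have hXinv := inv_conjStarAlgAut_diagonal hX.1.eigenvectorUnitary
    fun i => (hX.eigenvalues_pos i).ne'
  rw [← hX.1.spectral_theorem] at hXinv
  rw [hXinv, hM.re_trace_mul_conjStarAlgAut_diagonal_mul]
  simp only [Pi.inv_apply]

end Matrix

/-- Let `X` be PD Hermitian and `M` Hermitian. Then:
(i) if `Tr(X) ≤ 1`, then `Tr(M X⁻¹ M X⁻¹) ≥ Tr(M²)`; and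
(ii) if `M ≠ 0`, then `Tr(M X⁻¹ M X⁻¹) > 0`. -/
theorem stmt11 (d : ℕ) (X M : Matrix (Fin d) (Fin d) ℂ)
    (hX : X.PosDef) (hM : M.IsHermitian) :
    (X.trace.re ≤ 1 → (M * M).trace.re ≤ (M * X⁻¹ * M * X⁻¹).trace.re) ∧
    (M ≠ 0 → 0 < (M * X⁻¹ * M * X⁻¹).trace.re) := by
  set U := hX.1.eigenvectorUnitary
  have hpos := hX.eigenvalues_pos
  simp only [← RCLike.re_to_complex]
  refine ⟨fun htr => ?_, fun hM0 => ?_⟩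
  · rw [hM.re_trace_mul_self_s11 U, hX.re_trace_mul_inv_mul_mul_inv hM]
    exact sum_sum_norm_sq_le_sum_sum_mul_norm_sq _ fun i =>
      (one_le_inv₀ (hpos i)).2 ((hX.posSemidef.eigenvalues_le_re_trace i).trans htr)
  · rw [hX.re_trace_mul_inv_mul_mul_inv hM]
    refine sum_sum_mul_norm_sq_pos ?_ fun i => inv_pos.2 (hpos i)
    exact (map_ne_zero_iff _ (conjStarAlgAut ℂ _ U).symm.injective).2 hM0
end

section
/- Let d ≥ 2 and let x, x' ∈ {0,1}^d be binary vectors with k := Σ_i x_i and k' := Σ_i x'_i satisfying 1 ≤ k ≤ k' ≤ d−1 and x ≠ x'. Define the normalized target t' := x'/k' and the normalized complement return o := (𝟙_d − x)/(d−k), both elements of the probability simplex. Then ⟨t', o⟩ ≥ 1/d², and moreover ⟨x/k, o⟩ = 0. -/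
/-- Let `d ≥ 2` and `x, x' ∈ {0,1}^d` with `k := Σᵢ xᵢ`, `k' := Σᵢ x'ᵢ`
satisfying `1 ≤ k ≤ k' ≤ d−1` and `x ≠ x'`. With `t' := x'/k'` and
`o := (𝟙 − x)/(d−k)`, we have `⟨t', o⟩ ≥ 1/d²` and `⟨x/k, o⟩ = 0`. -/
theorem stmt12 (d : ℕ) (hd : 2 ≤ d) (x x' : Fin d → ℝ)
    (hx : ∀ i, x i = 0 ∨ x i = 1) (hx' : ∀ i, x' i = 0 ∨ x' i = 1)
    (hne : x ≠ x')
    (hk1 : 1 ≤ ∑ i, x i)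
    (hkk' : ∑ i, x i ≤ ∑ i, x' i)
    (hk'd : ∑ i, x' i ≤ (d : ℝ) - 1) :
    1 / (d : ℝ) ^ 2 ≤
        ∑ i, (x' i / ∑ j, x' j) * ((1 - x i) / ((d : ℝ) - ∑ j, x j)) ∧
      ∑ i, (x i / ∑ j, x j) * ((1 - x i) / ((d : ℝ) - ∑ j, x j)) = 0 := by
  have hk'pos : (0:ℝ) < ∑ j, x' j := by linarith
  have hdk : (0:ℝ) < (d:ℝ) - ∑ j, x j := by linarith
  constructor
  · -- find i with x' i = 1 and x i = 0
    have hpt : ∃ i, x' i = 1 ∧ x i = 0 := by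
      by_contra h
      push_neg at h
      have hle : ∀ i, x' i ≤ x i := by
        intro i
        rcases hx' i with h0 | h1
        · rw [h0]; rcases hx i with h' | h' <;> simp [h']
        · rcases hx i with h0' | h1'
          · exact absurd h0' (h i h1)
          · simp [h1, h1']
      obtain ⟨i, hi⟩ := Function.ne_iff.mp hne
      have hlt : x' i < x i := lt_of_le_of_ne (hle i) (Ne.symm hi)
      have : ∑ j, x' j < ∑ j, x j :=
        Finset.sum_lt_sum (fun j _ => hle j) ⟨i, Finset.mem_univ i, hlt⟩
      linarith
    obtain ⟨i₀, h1, h0⟩ := hpt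
    have hS : 1 ≤ ∑ i, x' i * (1 - x i) := by
      have := Finset.single_le_sum (f := fun i => x' i * (1 - x i))
        (fun i _ => by rcases hx' i with h | h <;> rcases hx i with h' | h' <;>
          simp [h, h']) (Finset.mem_univ i₀)
      simpa [h1, h0] using this
    have heq : ∑ i, (x' i / ∑ j, x' j) * ((1 - x i) / ((d : ℝ) - ∑ j, x j))
        = (∑ i, x' i * (1 - x i)) / ((∑ j, x' j) * ((d : ℝ) - ∑ j, x j)) := by
      rw [Finset.sum_div]
      exact Finset.sum_congr rfl fun i _ => by rw [div_mul_div_comm]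
    rw [heq, div_le_div_iff₀ (by positivity) (by positivity)]
    have hd2 : (2:ℝ) ≤ d := by exact_mod_cast hd
    nlinarith [hk'pos, hdk, hS, hk'd, hk1, hkk']
  · refine Finset.sum_eq_zero fun i _ => ?_
    rcases hx i with h | h <;> simp [h]
end

section
/- (Stability of log-barrier FTRL on the simplex.) Let d ≥ 2, η > 0, t ≥ 1, and let r₁,…,r_t ∈ Δ([d]). Let x_t be the unique minimizer over Δ([d]) of x ↦ η^{-1}R(x) + Σ_{s=1}^{t−1} f(x; r_s) (which lies in the relative interior of Δ([d])), and for λ ∈ [0,1] let x^λ be the unique minimizer over Δ([d]) of x ↦ η^{-1}R(x) + Σ_{s=1}^{t−1} f(x; r_s) + f(x; r_t) − (1−λ)⟨x, ∇f(x_t; r_t)⟩, where ∇f(x;r) = −r/⟨x,r⟩. Then for every coordinate i ∈ {1,…,d}: x^λ_i ≤ (1+η)·x_{t,i}; i.e. min_i x_{t,i}/x^λ_i ≥ 1/(1+η). -/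
/-!
Restrict both objectives to the segment from `x_t` to `x^λ`. First-order optimality at its two
ends, together with the monotonicity of the gradients of the log-barrier and of the log losses,
bounds `η⁻¹ Σᵢ (x^λᵢ - x_{t,i})² / (x_{t,i} x^λᵢ)` by `(B - A) / B - (1 - λ) (B - A) / A`, where
`A = ⟨x_t, r_t⟩` and `B = ⟨x^λ, r_t⟩`. If `c` is the largest ratio `x^λᵢ / x_{t,i}`, then
`B ≤ c A`, so the right side is at most `(c - 1) / c`, while the left side is at least
`η⁻¹ (c - 1)² / c`; hence `c ≤ 1 + η`.
-/

open Finset Real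

theorem IsMinOn.mul_sub_nonneg_of_hasDerivAt {f : ℝ → ℝ} {s : Set ℝ} {a b m : ℝ}
    (hs : Convex ℝ s) (hmin : IsMinOn f s a) (ha : a ∈ s) (hb : b ∈ s) (hf : HasDerivAt f m a) :
    0 ≤ m * (b - a) := by
  simpa [mul_comm] using hmin.localize.hasFDerivWithinAt_nonneg hf.hasFDerivAt.hasFDerivWithinAt
    (sub_mem_posTangentConeAt_of_segment_subset (hs.segment_subset ha hb))

theorem hasDerivAt_line_apply {ι : Type*} (x v : ι → ℝ) (i : ι) (θ : ℝ) :
    HasDerivAt (fun θ : ℝ => (x + θ • v) i) (v i) θ := by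
  simpa using ((hasDerivAt_id θ).mul_const (v i)).const_add (x i)

variable {ι : Type*} [Fintype ι]

variable (ι) in
def openSimplex : Set (ι → ℝ) := {x | (∀ i, 0 < x i) ∧ ∑ i, x i = 1}

theorem convex_openSimplex : Convex ℝ (openSimplex ι) := by
  rintro x ⟨hx, hx1⟩ y ⟨hy, hy1⟩ a b ha hb hab
  refine ⟨fun i => convex_Ioi (0 : ℝ) (hx i) (hy i) ha hb hab, ?_⟩
  simp [sum_add_distrib, ← mul_sum, hx1, hy1, hab]

theorem sum_mul_pos_of_mem_stdSimplex {x q : ι → ℝ} (hx : ∀ i, 0 < x i)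
    (hq : q ∈ stdSimplex ℝ ι) : 0 < ∑ i, x i * q i := by
  obtain ⟨j, -, hj⟩ := exists_lt_of_sum_lt (s := univ) (f := fun _ => (0:ℝ)) (g := q)
    (by simp [hq.2])
  exact sum_pos' (fun i _ => mul_nonneg (hx i).le (hq.1 i)) ⟨j, mem_univ j, mul_pos (hx j) hj⟩

theorem hasDerivAt_sum_line_mul (x v q : ι → ℝ) (θ : ℝ) :
    HasDerivAt (fun θ : ℝ => ∑ i, (x + θ • v) i * q i) (∑ i, v i * q i) θ :=
  HasDerivAt.fun_sum fun i _ => (hasDerivAt_line_apply x v i θ).mul_const (q i)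

theorem sub_div_sub_sub_div_eq {a b : ℝ} (ha : a ≠ 0) (hb : b ≠ 0) :
    (b - a) / a - (b - a) / b = (b - a) ^ 2 / (a * b) := by
  field_simp

theorem sub_div_sub_mul_sub_div_le {A B c μ : ℝ} (hA : 0 < A) (hB : 0 < B) (hc : 1 ≤ c)
    (hBc : B ≤ c * A) (hμ0 : 0 ≤ μ) (hμ1 : μ ≤ 1) :
    (B - A) / B - μ * (B - A) / A ≤ (c - 1) / c := by
  rcases le_total B A with hBA | hAB
  · have : (B - A) / B ≤ μ * (B - A) / A := by
      rw [div_le_div_iff₀ hB hA]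
      nlinarith [mul_nonneg (sub_nonneg.2 hBA) (show 0 ≤ A - μ * B by nlinarith)]
    have : 0 ≤ (c - 1) / c := div_nonneg (by linarith) (by linarith)
    linarith
  · have : 0 ≤ μ * (B - A) / A := by positivity
    have : (B - A) / B ≤ (c - 1) / c := by
      rw [div_le_div_iff₀ hB (by linarith)]; nlinarith
    linarith

theorem le_one_add_of_inv_mul_sq_div_le {η c : ℝ} (hη : 0 < η) (hc : 0 < c)
    (h : η⁻¹ * ((c - 1) ^ 2 / c) ≤ (c - 1) / c) : c ≤ 1 + η := by
  have : (c - 1) ^ 2 ≤ η * (c - 1) := by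
    rwa [inv_mul_le_iff₀ hη, div_le_iff₀ hc, mul_assoc, div_mul_cancel₀ _ hc.ne'] at h
  nlinarith

section Objective

variable (η : ℝ) (r : ℕ → ι → ℝ) (S : Finset ℕ)

noncomputable def ftrlObjective (x : ι → ℝ) : ℝ :=
  η⁻¹ * (-∑ i, log (x i)) + ∑ s ∈ S, -log (∑ i, x i * r s i)

noncomputable def ftrlObjectiveDeriv (x v : ι → ℝ) : ℝ :=
  η⁻¹ * (-∑ i, v i / x i) + ∑ s ∈ S, -((∑ i, v i * r s i) / ∑ i, x i * r s i)

variable {η r S}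

theorem hasDerivAt_ftrlObjective_line {x v : ι → ℝ} {θ : ℝ} (hx : ∀ i, (x + θ • v) i ≠ 0)
    (hS : ∀ s ∈ S, ∑ i, (x + θ • v) i * r s i ≠ 0) :
    HasDerivAt (fun θ : ℝ => ftrlObjective η r S (x + θ • v))
      (ftrlObjectiveDeriv η r S (x + θ • v) v) θ :=
  ((HasDerivAt.fun_sum fun i _ => (hasDerivAt_line_apply x v i θ).log (hx i)).neg.const_mul
    η⁻¹).add (HasDerivAt.fun_sum fun s hs => ((hasDerivAt_sum_line_mul x v (r s) θ).log
      (hS s hs)).neg)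

theorem inv_mul_sum_sq_div_le_ftrlObjectiveDeriv_sub {x y : ι → ℝ} (hx : ∀ i, 0 < x i)
    (hy : ∀ i, 0 < y i) (hS : ∀ s ∈ S, 0 < ∑ i, x i * r s i ∧ 0 < ∑ i, y i * r s i) :
    η⁻¹ * ∑ i, (y i - x i) ^ 2 / (x i * y i) ≤
      ftrlObjectiveDeriv η r S y (y - x) - ftrlObjectiveDeriv η r S x (y - x) := by
  have hbarrier : ∑ i, (y i - x i) ^ 2 / (x i * y i) =
      ∑ i, (y i - x i) / x i - ∑ i, (y i - x i) / y i := by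
    rw [← sum_sub_distrib]
    exact sum_congr rfl fun i _ => (sub_div_sub_sub_div_eq (hx i).ne' (hy i).ne').symm
  have hloss : 0 ≤ ∑ s ∈ S, -((∑ i, y i * r s i - ∑ i, x i * r s i) / ∑ i, y i * r s i) -
      ∑ s ∈ S, -((∑ i, y i * r s i - ∑ i, x i * r s i) / ∑ i, x i * r s i) := by
    rw [← sum_sub_distrib]
    refine sum_nonneg fun s hs => ?_
    obtain ⟨hxs, hys⟩ := hS s hs
    rw [neg_sub_neg, sub_div_sub_sub_div_eq hxs.ne' hys.ne']
    positivity
  simp only [ftrlObjectiveDeriv, Pi.sub_apply, sub_mul, sum_sub_distrib, hbarrier]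
  linear_combination hloss

end Objective

theorem inv_mul_sum_sq_div_le_of_isMinOn_ftrlObjective {η μ A : ℝ} {r : ℕ → ι → ℝ}
    {S : Finset ℕ} {q x y : ι → ℝ} (hx : x ∈ openSimplex ι) (hy : y ∈ openSimplex ι)
    (hr : ∀ s ∈ S, r s ∈ stdSimplex ℝ ι) (hq : q ∈ stdSimplex ℝ ι)
    (hxmin : IsMinOn (ftrlObjective η r S) (openSimplex ι) x)
    (hymin : IsMinOn (fun z => ftrlObjective η r S z + -log (∑ i, z i * q i) +
      μ * (∑ i, z i * q i) / A) (openSimplex ι) y) :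
    η⁻¹ * ∑ i, (y i - x i) ^ 2 / (x i * y i) ≤
      (∑ i, y i * q i - ∑ i, x i * q i) / ∑ i, y i * q i -
        μ * (∑ i, y i * q i - ∑ i, x i * q i) / A := by
  set L : ℝ → ι → ℝ := fun θ => x + θ • (y - x)
  have hL : Set.MapsTo L (Set.Icc 0 1) (openSimplex ι) := fun θ hθ =>
    convex_openSimplex.add_smul_sub_mem hx hy hθ
  have hL0 : L 0 = x := by simp [L]
  have hL1 : L 1 = y := by simp [L]
  have hxS s (hs : s ∈ S) := sum_mul_pos_of_mem_stdSimplex hx.1 (hr s hs)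
  have hyS s (hs : s ∈ S) := sum_mul_pos_of_mem_stdSimplex hy.1 (hr s hs)
  have hFx : 0 ≤ ftrlObjectiveDeriv η r S x (y - x) := by
    have hderiv := hasDerivAt_ftrlObjective_line (θ := 0) (x := x) (v := y - x) (η := η)
      (by simpa using fun i => (hx.1 i).ne') (by simpa using fun s hs => (hxS s hs).ne')
    simp only [zero_smul, add_zero] at hderiv
    simpa using (hxmin.comp_mapsTo hL hL0).mul_sub_nonneg_of_hasDerivAt (convex_Icc 0 1)
      (Set.left_mem_Icc.2 zero_le_one) (Set.right_mem_Icc.2 zero_le_one) hderiv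
  have hGy : ftrlObjectiveDeriv η r S y (y - x) +
      -((∑ i, y i * q i - ∑ i, x i * q i) / ∑ i, y i * q i) +
        μ * (∑ i, y i * q i - ∑ i, x i * q i) / A ≤ 0 := by
    have hF := hasDerivAt_ftrlObjective_line (θ := 1) (x := x) (v := y - x) (η := η)
      (by simpa using fun i => (hy.1 i).ne') (by simpa using fun s hs => (hyS s hs).ne')
    have hlog := (hasDerivAt_sum_line_mul x (y - x) q 1).log
      (by simpa using (sum_mul_pos_of_mem_stdSimplex hy.1 hq).ne')
    have hlin := ((hasDerivAt_sum_line_mul x (y - x) q 1).const_mul μ).div_const A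
    have hderiv := (hF.add hlog.neg).add hlin
    simp only [one_smul, add_sub_cancel, Pi.sub_apply, sub_mul, sum_sub_distrib] at hderiv
    have := (hymin.comp_mapsTo hL hL1).mul_sub_nonneg_of_hasDerivAt (convex_Icc 0 1)
      (Set.right_mem_Icc.2 zero_le_one) (Set.left_mem_Icc.2 zero_le_one) hderiv
    linarith
  linarith [inv_mul_sum_sq_div_le_ftrlObjectiveDeriv_sub (η := η) hx.1 hy.1
    fun s hs => ⟨hxS s hs, hyS s hs⟩]

theorem le_one_add_mul_of_inv_mul_sum_sq_div_le {η μ : ℝ} {q x y : ι → ℝ} (hη : 0 < η)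
    (hx : x ∈ openSimplex ι) (hy : y ∈ openSimplex ι) (hq : q ∈ stdSimplex ℝ ι)
    (hμ0 : 0 ≤ μ) (hμ1 : μ ≤ 1)
    (h : η⁻¹ * ∑ i, (y i - x i) ^ 2 / (x i * y i) ≤
      (∑ i, y i * q i - ∑ i, x i * q i) / ∑ i, y i * q i -
        μ * (∑ i, y i * q i - ∑ i, x i * q i) / ∑ i, x i * q i) (i : ι) :
    y i ≤ (1 + η) * x i := by
  obtain ⟨j, -, hj⟩ := exists_max_image univ (fun k => y k / x k) ⟨i, mem_univ i⟩
  set c := y j / x j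
  have hyc k : y k ≤ c * x k := (div_le_iff₀ (hx.1 k)).1 (hj k (mem_univ k))
  have hc1 : 1 ≤ c := by
    have := sum_le_sum fun k (_ : k ∈ univ) => hyc k
    rwa [← mul_sum, hx.2, hy.2, mul_one] at this
  have hqc : ∑ k, y k * q k ≤ c * ∑ k, x k * q k := by
    rw [mul_sum]
    exact sum_le_sum fun k _ => by
      rw [← mul_assoc]; exact mul_le_mul_of_nonneg_right (hyc k) (hq.1 k)
  have hj_term : (y j - x j) ^ 2 / (x j * y j) = (c - 1) ^ 2 / c := by
    have := (hx.1 j).ne'; have := (hy.1 j).ne'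
    simp only [c]
    field_simp
  have hc : c ≤ 1 + η := le_one_add_of_inv_mul_sq_div_le hη (by linarith) <| calc
    η⁻¹ * ((c - 1) ^ 2 / c) ≤ η⁻¹ * ∑ k, (y k - x k) ^ 2 / (x k * y k) := by
      rw [← hj_term]
      gcongr
      exact single_le_sum (f := fun k => (y k - x k) ^ 2 / (x k * y k))
        (fun k _ => div_nonneg (sq_nonneg _) (mul_pos (hx.1 k) (hy.1 k)).le) (mem_univ j)
    _ ≤ _ := h
    _ ≤ (c - 1) / c := sub_div_sub_mul_sub_div_le (sum_mul_pos_of_mem_stdSimplex hx.1 hq)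
      (sum_mul_pos_of_mem_stdSimplex hy.1 hq) hc1 hqc hμ0 hμ1
  exact (hyc i).trans (mul_le_mul_of_nonneg_right hc (hx.1 i).le)

theorem stmt16_general (d : ℕ) (η : ℝ) (hη : 0 < η) (t : ℕ) (ht : 1 ≤ t)
    (r : ℕ → Fin d → ℝ)
    (hr : ∀ s, 1 ≤ s → s ≤ t → (∀ i, 0 ≤ r s i) ∧ ∑ i, r s i = 1)
    (lam : ℝ) (hlam0 : 0 ≤ lam) (hlam1 : lam ≤ 1)
    (xt xl : Fin d → ℝ)
    (hxt_pos : ∀ i, 0 < xt i) (hxt_sum : ∑ i, xt i = 1)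
    (hxl_pos : ∀ i, 0 < xl i) (hxl_sum : ∑ i, xl i = 1)
    (hxt_min : ∀ y : Fin d → ℝ, (∀ i, 0 < y i) → ∑ i, y i = 1 →
      η⁻¹ * (-∑ i, Real.log (xt i)) +
          ∑ s ∈ Finset.Icc 1 (t - 1), -Real.log (∑ i, xt i * r s i) ≤
        η⁻¹ * (-∑ i, Real.log (y i)) +
          ∑ s ∈ Finset.Icc 1 (t - 1), -Real.log (∑ i, y i * r s i))
    (hxl_min : ∀ y : Fin d → ℝ, (∀ i, 0 < y i) → ∑ i, y i = 1 →
      η⁻¹ * (-∑ i, Real.log (xl i)) +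
          ∑ s ∈ Finset.Icc 1 (t - 1), -Real.log (∑ i, xl i * r s i) +
          -Real.log (∑ i, xl i * r t i) +
          (1 - lam) * (∑ i, xl i * r t i) / (∑ i, xt i * r t i) ≤
        η⁻¹ * (-∑ i, Real.log (y i)) +
          ∑ s ∈ Finset.Icc 1 (t - 1), -Real.log (∑ i, y i * r s i) +
          -Real.log (∑ i, y i * r t i) +
          (1 - lam) * (∑ i, y i * r t i) / (∑ i, xt i * r t i)) :
    ∀ i, xl i ≤ (1 + η) * xt i := by
  have hxt : xt ∈ openSimplex (Fin d) := ⟨hxt_pos, hxt_sum⟩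
  have hxl : xl ∈ openSimplex (Fin d) := ⟨hxl_pos, hxl_sum⟩
  have hpast : ∀ s ∈ Finset.Icc 1 (t - 1), r s ∈ stdSimplex ℝ (Fin d) := fun s hs =>
    hr s (mem_Icc.1 hs).1 ((mem_Icc.1 hs).2.trans (Nat.sub_le t 1))
  have hfirstOrder := inv_mul_sum_sq_div_le_of_isMinOn_ftrlObjective hxt hxl hpast
    (hr t ht le_rfl) (fun y hy => hxt_min y hy.1 hy.2) (fun y hy => hxl_min y hy.1 hy.2)
  exact le_one_add_mul_of_inv_mul_sum_sq_div_le hη hxt hxl (hr t ht le_rfl) (by linarith)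
    (by linarith) hfirstOrder

/-- Stability of log-barrier FTRL on the simplex. Let `d ≥ 2`, `η > 0`,
`t ≥ 1`, returns `r₁,…,r_t ∈ Δ([d])`. Let `x_t` be the minimizer over (the relative
interior of) `Δ([d])` of `x ↦ η⁻¹R(x) + Σ_{s=1}^{t−1} f(x; r_s)` with
`R(x) = −Σᵢ log xᵢ` and `f(x;r) = −log⟨x,r⟩`, and for `λ ∈ [0,1]` let `x^λ` be the
minimizer of the same objective with the additional terms
`f(x; r_t) − (1−λ)⟨x, ∇f(x_t; r_t)⟩`, where `∇f(x;r) = −r/⟨x,r⟩` (so the linear term is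
`+(1−λ)⟨x, r_t⟩/⟨x_t, r_t⟩`). Then `x^λ_i ≤ (1+η)·x_{t,i}` for every coordinate `i`. -/
theorem stmt16 (d : ℕ) (hd : 2 ≤ d) (η : ℝ) (hη : 0 < η) (t : ℕ) (ht : 1 ≤ t)
    (r : ℕ → Fin d → ℝ)
    (hr : ∀ s, 1 ≤ s → s ≤ t → (∀ i, 0 ≤ r s i) ∧ ∑ i, r s i = 1)
    (lam : ℝ) (hlam0 : 0 ≤ lam) (hlam1 : lam ≤ 1)
    (xt xl : Fin d → ℝ)
    (hxt_pos : ∀ i, 0 < xt i) (hxt_sum : ∑ i, xt i = 1)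
    (hxl_pos : ∀ i, 0 < xl i) (hxl_sum : ∑ i, xl i = 1)
    (hxt_min : ∀ y : Fin d → ℝ, (∀ i, 0 < y i) → ∑ i, y i = 1 →
      η⁻¹ * (-∑ i, Real.log (xt i)) +
          ∑ s ∈ Finset.Icc 1 (t - 1), -Real.log (∑ i, xt i * r s i) ≤
        η⁻¹ * (-∑ i, Real.log (y i)) +
          ∑ s ∈ Finset.Icc 1 (t - 1), -Real.log (∑ i, y i * r s i))
    (hxl_min : ∀ y : Fin d → ℝ, (∀ i, 0 < y i) → ∑ i, y i = 1 →
      η⁻¹ * (-∑ i, Real.log (xl i)) +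
          ∑ s ∈ Finset.Icc 1 (t - 1), -Real.log (∑ i, xl i * r s i) +
          -Real.log (∑ i, xl i * r t i) +
          (1 - lam) * (∑ i, xl i * r t i) / (∑ i, xt i * r t i) ≤
        η⁻¹ * (-∑ i, Real.log (y i)) +
          ∑ s ∈ Finset.Icc 1 (t - 1), -Real.log (∑ i, y i * r s i) +
          -Real.log (∑ i, y i * r t i) +
          (1 - lam) * (∑ i, y i * r t i) / (∑ i, xt i * r t i)) :
    ∀ i, xl i ≤ (1 + η) * xt i :=
  stmt16_general d η hη t ht r hr lam hlam0 hlam1 xt xl hxt_pos hxt_sum hxl_pos hxl_sum hxt_min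
    hxl_min
end

section
/- (Elliptical potential bound.) Let n ≥ 1, γ > 0, and v₁,…,v_L ∈ ℂ^n. Define the Hermitian positive definite matrices A_τ := I_n + γ·Σ_{s=1}^{τ} v_s v_s^* for τ = 0,1,…,L (so A₀ = I_n). Then each v_τ^* A_τ^{-1} v_τ is a nonnegative real number, det(A_L) is a real number ≥ 1, and Σ_{τ=1}^{L} v_τ^* A_τ^{-1} v_τ ≤ γ^{-1}·log det(A_L). -/
open Matrix
open scoped ComplexOrder
/-!
Removing the rank-one term `γ v_τ v_τ^*` from `A_τ` multiplies the determinant by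
`1 - γ v_τ^* A_τ⁻¹ v_τ` (matrix determinant lemma), so
`γ v_τ^* A_τ⁻¹ v_τ = 1 - det A_{τ-1} / det A_τ`. Since `1 - x⁻¹ ≤ log x`, each term is at
most `γ⁻¹ (log det A_τ - log det A_{τ-1})`, and the sum telescopes down to `log det A_0 = 0`.
-/

open Finset

namespace Matrix

theorem det_sub_smul_vecMulVec {m R : Type*} [Fintype m] [DecidableEq m]
    [CommRing R] {A : Matrix m m R} (hA : IsUnit A.det) (c : R) (u w : m → R) :
    (A - c • vecMulVec u w).det = A.det * (1 - c * (w ⬝ᵥ A⁻¹ *ᵥ u)) := by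
  have hrank_one :
      A - c • vecMulVec u w = A + replicateCol Unit (-c • u) * replicateRow Unit w := by
    rw [← vecMulVec_eq Unit, neg_smul, neg_vecMulVec, smul_vecMulVec, sub_eq_add_neg]
  rw [hrank_one, det_add_replicateCol_mul_replicateRow hA, ← replicateRow_vecMul]
  congr 1
  rw [det_unique, add_apply, one_apply_eq, replicateRow_mul_replicateCol_apply, neg_smul,
    dotProduct_neg, dotProduct_smul, ← dotProduct_mulVec, smul_eq_mul, ← sub_eq_add_neg]

theorem posDef_one_add_smul_sum_vecMulVec_star {m ι 𝕜 : Type*} [Fintype m] [DecidableEq m]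
    [RCLike 𝕜] {c : 𝕜} (hc : 0 ≤ c) (s : Finset ι) (v : ι → m → 𝕜) :
    (1 + c • ∑ i ∈ s, vecMulVec (v i) (star (v i))).PosDef :=
  PosDef.one.add_posSemidef <|
    (posSemidef_sum s fun i _ => posSemidef_vecMulVec_self_star (v i)).smul hc

end Matrix

namespace Real

theorem le_log_sub_log_of_eq_mul_one_sub {x y t : ℝ} (hx : 0 < x) (hy : 0 < y)
    (h : x = y * (1 - t)) : t ≤ log y - log x := by
  have hratio : 1 - (y / x)⁻¹ = t := by
    rw [inv_div, h, mul_div_cancel_left₀ _ hy.ne']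
    ring
  rw [← log_div hy.ne' hx.ne', ← hratio]
  exact one_sub_inv_le_log_of_pos (div_pos hy hx)

theorem sum_Icc_le_inv_mul_log_of_eq_mul_one_sub {d q : ℕ → ℝ} {γ : ℝ} (hγ : 0 < γ)
    (hd : ∀ k, 0 < d k) (hd0 : d 0 = 1) (hstep : ∀ k, d k = d (k + 1) * (1 - γ * q (k + 1)))
    (L : ℕ) : ∑ τ ∈ Icc 1 L, q τ ≤ γ⁻¹ * log (d L) := by
  induction L with
  | zero => simp [hd0]
  | succ k ih =>
    have hterm : γ * q (k + 1) ≤ log (d (k + 1)) - log (d k) :=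
      le_log_sub_log_of_eq_mul_one_sub (hd k) (hd (k + 1)) (hstep k)
    rw [sum_Icc_succ_top (by omega)]
    calc ∑ τ ∈ Icc 1 k, q τ + q (k + 1)
        ≤ γ⁻¹ * log (d k) + γ⁻¹ * (log (d (k + 1)) - log (d k)) := by
          gcongr
          rwa [le_inv_mul_iff₀ hγ]
      _ = γ⁻¹ * log (d (k + 1)) := by ring

end Real

theorem stmt19_general (n L : ℕ) (γ : ℝ) (hγ : 0 < γ)
    (v : ℕ → Fin n → ℂ)
    (A : ℕ → Matrix (Fin n) (Fin n) ℂ)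
    (hA : ∀ τ, A τ = 1 + (γ : ℂ) •
      ∑ s ∈ Finset.Icc 1 τ, Matrix.vecMulVec (v s) (star (v s))) :
    (∀ τ, (A τ).PosDef) ∧
    (∀ τ, 1 ≤ τ → τ ≤ L →
      0 ≤ (dotProduct (star (v τ)) ((A τ)⁻¹.mulVec (v τ))).re ∧
      (dotProduct (star (v τ)) ((A τ)⁻¹.mulVec (v τ))).im = 0) ∧
    (1 ≤ (A L).det.re ∧ (A L).det.im = 0) ∧
    ∑ τ ∈ Finset.Icc 1 L, (dotProduct (star (v τ)) ((A τ)⁻¹.mulVec (v τ))).re ≤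
      γ⁻¹ * Real.log (A L).det.re := by
  have hPD (τ : ℕ) : (A τ).PosDef :=
    hA τ ▸ posDef_one_add_smul_sum_vecMulVec_star (Complex.zero_le_real.mpr hγ.le) _ _
  have hq (τ : ℕ) : 0 ≤ star (v τ) ⬝ᵥ (A τ)⁻¹ *ᵥ v τ :=
    (hPD τ).inv.posSemidef.dotProduct_mulVec_nonneg _
  have hdet (τ : ℕ) : 0 < (A τ).det := (hPD τ).det_pos
  have hdowndate (k : ℕ) :
      A k = A (k + 1) - (γ : ℂ) • vecMulVec (v (k + 1)) (star (v (k + 1))) := by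
    rw [hA, hA, sum_Icc_succ_top (by omega), smul_add, add_sub_assoc, add_sub_cancel_right]
  have hstep (k : ℕ) : (A k).det.re =
      (A (k + 1)).det.re * (1 - γ * (star (v (k + 1)) ⬝ᵥ (A (k + 1))⁻¹ *ᵥ v (k + 1)).re) := by
    have h := det_sub_smul_vecMulVec (hdet (k + 1)).ne'.isUnit (γ : ℂ) (v (k + 1))
      (star (v (k + 1)))
    -- the determinants and the quadratic form are nonnegative, hence real
    rw [← hdowndate, Complex.eq_re_of_ofReal_le (hdet k).le,
      Complex.eq_re_of_ofReal_le (hdet (k + 1)).le, Complex.eq_re_of_ofReal_le (hq (k + 1))] at h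
    exact_mod_cast h
  have hsum := Real.sum_Icc_le_inv_mul_log_of_eq_mul_one_sub
    (q := fun τ => (star (v τ) ⬝ᵥ (A τ)⁻¹ *ᵥ v τ).re) hγ
    (fun τ => (Complex.pos_iff.mp (hdet τ)).1) (by simp [hA]) hstep L
  have hlog : 0 ≤ Real.log (A L).det.re := by
    have := (sum_nonneg fun τ _ => (Complex.nonneg_iff.mp (hq τ)).1).trans hsum
    rwa [mul_nonneg_iff_of_pos_left (inv_pos.mpr hγ)] at this
  exact ⟨hPD,
    fun τ _ _ => ⟨(Complex.nonneg_iff.mp (hq τ)).1, (Complex.nonneg_iff.mp (hq τ)).2.symm⟩,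
    ⟨(Real.log_nonneg_iff (Complex.pos_iff.mp (hdet L)).1).mp hlog,
      (Complex.pos_iff.mp (hdet L)).2.symm⟩, hsum⟩

/-- Elliptical potential bound. Let `n ≥ 1`, `γ > 0`, `v₁,…,v_L ∈ ℂⁿ`,
and `A_τ := I + γ·Σ_{s=1}^{τ} v_s v_s^*` (Hermitian positive definite, `A₀ = I`).
Then each `v_τ^* A_τ⁻¹ v_τ` is a nonnegative real, `det(A_L)` is a real number `≥ 1`,
and `Σ_{τ=1}^{L} v_τ^* A_τ⁻¹ v_τ ≤ γ⁻¹·log det(A_L)`. -/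
theorem stmt19 (n L : ℕ) (hn : 1 ≤ n) (γ : ℝ) (hγ : 0 < γ)
    (v : ℕ → Fin n → ℂ)
    (A : ℕ → Matrix (Fin n) (Fin n) ℂ)
    (hA : ∀ τ, A τ = 1 + (γ : ℂ) •
      ∑ s ∈ Finset.Icc 1 τ, Matrix.vecMulVec (v s) (star (v s))) :
    (∀ τ, (A τ).PosDef) ∧
    (∀ τ, 1 ≤ τ → τ ≤ L →
      0 ≤ (dotProduct (star (v τ)) ((A τ)⁻¹.mulVec (v τ))).re ∧
      (dotProduct (star (v τ)) ((A τ)⁻¹.mulVec (v τ))).im = 0) ∧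
    (1 ≤ (A L).det.re ∧ (A L).det.im = 0) ∧
    ∑ τ ∈ Finset.Icc 1 L, (dotProduct (star (v τ)) ((A τ)⁻¹.mulVec (v τ))).re ≤
      γ⁻¹ * Real.log (A L).det.re :=
  stmt19_general n L γ hγ v A hA
end
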